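/- arXiv:1812.05202 — 9 statements merged into one kernel-verified Lean document; each statement's English description precedes it below -/
import Mathlib

section
/- Let q be an odd prime, let D be the regular q^{n-m} design with generators (c_{ij}), let γ and b* be as defined, and let E_{b*} = W(D_{b*}) be obtained by applying the Williams transformation to every entry of D_{b*}. Then for every family of orthonormal polynomials on Z_q, β_3(E_{b*}) = 0. -/
open Finset Real

/-- The Williams transformation on natural-number representatives of `Z_q`:
`W(x) = 2x` if `0 ≤ x < q/2` and `W(x) = 2(q-x) - 1` if `q/2 ≤ x < q`. -/
def Wnat (q x : ℕ) : ℕ := if 2 * x < q then 2 * x else 2 * (q - x) - 1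

/-- The Williams transformation on `ZMod q`, applied to the canonical
representative in `{0, 1, ..., q-1}`. -/
def Wz (q : ℕ) (x : ZMod q) : ZMod q := (Wnat q x.val : ZMod q)

/-- `γ = (q-1)/4` if `q ≡ 1 (mod 4)` and `γ = (3q-1)/4` if `q ≡ 3 (mod 4)`. -/
def gammaNat (q : ℕ) : ℕ := if q % 4 = 1 then (q - 1) / 4 else (3 * q - 1) / 4

/-- The regular `q^{n-m}` design with `k = n - m` independent columns and `m` dependent
columns with generator coefficients `c`.  Rows are indexed by the full factorial
`Fin k → ZMod q`; columns are indexed by `Fin k ⊕ Fin m`, where `Sum.inl j` is the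
independent column `x_j` and `Sum.inr i` is the dependent column `∑ j, c i j * x_j`. -/
def regDesign {q k m : ℕ} (c : Fin m → Fin k → ZMod q) :
    (Fin k → ZMod q) → Fin k ⊕ Fin m → ZMod q :=
  fun x => Sum.elim x fun i => ∑ j, c i j * x j

/-- The design `D_b`, obtained from the regular design by adding `b_i` to the `i`-th
dependent column. -/
def regDesignB {q k m : ℕ} (c : Fin m → Fin k → ZMod q) (b : Fin m → ZMod q) :
    (Fin k → ZMod q) → Fin k ⊕ Fin m → ZMod q :=
  fun x => Sum.elim x fun i => (∑ j, c i j * x j) + b i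

/-- The design `E_b = W(D_b)`, obtained by applying the Williams transformation to
every entry of `D_b`. -/
def Eb {q k m : ℕ} (c : Fin m → Fin k → ZMod q) (b : Fin m → ZMod q) :
    (Fin k → ZMod q) → Fin k ⊕ Fin m → ZMod q :=
  fun x col => Wz q (regDesignB c b x col)

/-- The permutation vector `b*` with `b*_i = (1 - ∑ j, c i j) * γ (mod q)`. -/
def bstar {q k m : ℕ} (c : Fin m → Fin k → ZMod q) : Fin m → ZMod q :=
  fun i => (1 - ∑ j, c i j) * (gammaNat q : ZMod q)

/-- A family of orthonormal polynomials on `Z_q`: `p_0 ≡ 1`, `p_j` has degree exactly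
`j` for `j < q`, and `∑_{x=0}^{q-1} p_i(x) p_j(x)` equals `q` if `i = j` and `0`
otherwise. -/
def IsOrthonormalFamily (q : ℕ) (p : ℕ → Polynomial ℝ) : Prop :=
  p 0 = 1 ∧ (∀ j < q, (p j).degree = j) ∧
    ∀ i < q, ∀ j < q,
      (∑ x ∈ Finset.range q, (p i).eval (x : ℝ) * (p j).eval (x : ℝ)) =
        if i = j then (q : ℝ) else 0

/-- The `β`-wordlength pattern value
`β_k(A) = N⁻² ∑_{u : u₁+⋯+uₙ = k} (∑ᵢ ∏ⱼ p_{uⱼ}(aᵢⱼ))²`. -/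
noncomputable def betaWL {Row Col : Type*} [Fintype Row] [Fintype Col] [DecidableEq Col]
    (q : ℕ) (p : ℕ → Polynomial ℝ) (k : ℕ) (A : Row → Col → ZMod q) : ℝ :=
  ((Fintype.card Row : ℝ) ^ 2)⁻¹ *
    ∑ u ∈ Finset.univ.filter (fun u : Col → Fin q => (∑ j, (u j : ℕ)) = k),
      (∑ i : Row, ∏ j : Col, (p (u j : ℕ)).eval ((A i j).val : ℝ)) ^ 2

section AuxLemmas
open Polynomial

lemma span_aux (q : ℕ) (p : ℕ → Polynomial ℝ) (hdeg : ∀ j < q, (p j).degree = j) :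
    ∀ j, j ≤ q → ∀ f : Polynomial ℝ, f.degree < (j : ℕ) →
      ∃ a : ℕ → ℝ, f = ∑ i ∈ Finset.range j, a i • p i := by
  intro j
  induction j with
  | zero =>
    intro _ f hf
    refine ⟨0, ?_⟩
    have : f = 0 := degree_eq_bot.mp (Nat.WithBot.lt_zero_iff.mp (by simpa using hf))
    simp [this]
  | succ j ih =>
    intro hj f hf
    have hjq : j < q := hj
    have hdj : (p j).degree = j := hdeg j hjq
    have hpj0 : p j ≠ 0 := fun h => by simp [h] at hdj
    have hnd : (p j).natDegree = j := natDegree_eq_of_degree_eq_some hdj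
    have hlc : (p j).coeff j ≠ 0 := by
      have := mt leadingCoeff_eq_zero.mp hpj0
      rwa [leadingCoeff, hnd] at this
    set cst := f.coeff j / (p j).coeff j with hcst
    set g := f - cst • p j with hg
    have hgc : g.coeff j = 0 := by
      simp [hg, coeff_smul, smul_eq_mul, hcst, div_mul_cancel₀ _ hlc]
    have hgdeg : g.degree < (j : ℕ) := by
      rw [degree_lt_iff_coeff_zero]
      intro m hm
      rcases eq_or_lt_of_le hm with rfl | hm'
      · exact hgc
      · have h1 : f.coeff m = 0 := coeff_eq_zero_of_degree_lt (lt_of_lt_of_le hf (by exact_mod_cast hm'))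
        have h2 : (p j).coeff m = 0 := coeff_eq_zero_of_degree_lt (by rw [hdj]; exact_mod_cast hm')
        simp [hg, coeff_smul, h1, h2]
    obtain ⟨a, ha⟩ := ih (le_of_lt hj) g hgdeg
    refine ⟨Function.update a j cst, ?_⟩
    rw [Finset.sum_range_succ, Function.update_self]
    have : ∑ i ∈ Finset.range j, Function.update a j cst i • p i
        = ∑ i ∈ Finset.range j, a i • p i := by
      apply Finset.sum_congr rfl
      intro i hi
      rw [Function.update_of_ne (Finset.mem_range.mp hi).ne]
    rw [this, ← ha, hg]
    ring

lemma reflect_eval (q : ℕ) (p : ℕ → Polynomial ℝ) (hp : IsOrthonormalFamily q p) :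
    ∀ j, j < q → ∀ x ∈ Finset.range q,
      (p j).eval ((q : ℝ) - 1 - (x:ℝ)) = (-1 : ℝ) ^ j * (p j).eval (x:ℝ) := by
  obtain ⟨_, hdeg, horth⟩ := hp
  intro j
  induction j using Nat.strong_induction_on with
  | _ j ih =>
  intro hjq
  have hdj : (p j).degree = j := hdeg j hjq
  have hpj0 : p j ≠ 0 := fun h => by simp [h] at hdj
  have hnd : (p j).natDegree = j := natDegree_eq_of_degree_eq_some hdj
  set L : Polynomial ℝ := Polynomial.C ((q : ℝ) - 1) - Polynomial.X with hL
  have hLdeg : L.natDegree = 1 := by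
    rw [hL]
    have : Polynomial.C ((q : ℝ) - 1) - Polynomial.X = -(Polynomial.X - Polynomial.C ((q : ℝ) - 1)) := by ring
    rw [this, natDegree_neg, natDegree_X_sub_C]
  have hLlc : L.leadingCoeff = -1 := by
    have : L = -(Polynomial.X - Polynomial.C ((q : ℝ) - 1)) := by rw [hL]; ring
    rw [this, leadingCoeff_neg, (monic_X_sub_C ((q:ℝ)-1)).leadingCoeff]
  set Q : Polynomial ℝ := (p j).comp L with hQ
  have hQeval : ∀ x : ℝ, Q.eval x = (p j).eval ((q : ℝ) - 1 - x) := by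
    intro x; simp [hQ, hL, eval_comp]
  have hQnd : Q.natDegree = j := by
    rw [hQ, natDegree_comp, hLdeg, hnd, mul_one]
  have hQlc : Q.coeff j = (-1 : ℝ) ^ j * (p j).coeff j := by
    have h1 : Q.leadingCoeff = (p j).leadingCoeff * L.leadingCoeff ^ (p j).natDegree :=
      leadingCoeff_comp (by rw [hLdeg]; exact one_ne_zero)
    have h2 : Q.coeff j = Q.leadingCoeff := by rw [leadingCoeff, hQnd]
    rw [h2, h1, hLlc, hnd, leadingCoeff, hnd]
    ring
  set R : Polynomial ℝ := Q - ((-1 : ℝ) ^ j) • p j with hR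
  have hRdeg : R.degree < (j : ℕ) := by
    rw [degree_lt_iff_coeff_zero]
    intro m hm
    rcases eq_or_lt_of_le hm with rfl | hm'
    · simp [hR, coeff_smul, hQlc, smul_eq_mul]
    · have h1 : Q.coeff m = 0 := coeff_eq_zero_of_natDegree_lt (by omega)
      have h2 : (p j).coeff m = 0 := coeff_eq_zero_of_natDegree_lt (by omega)
      simp [hR, coeff_smul, h1, h2]
  -- orthogonality of R against p i for i < j, on the points
  have hRorth : ∀ i, i < j → ∑ x ∈ Finset.range q, R.eval (x : ℝ) * (p i).eval (x : ℝ) = 0 := by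
    intro i hij
    have hiq : i < q := lt_trans hij hjq
    have hQsum : ∑ x ∈ Finset.range q, Q.eval (x : ℝ) * (p i).eval (x : ℝ) = 0 := by
      have hrefl := Finset.sum_range_reflect
        (fun y : ℕ => (p j).eval (y : ℝ) * (p i).eval ((q : ℝ) - 1 - (y : ℝ))) q
      have hstep : ∀ x ∈ Finset.range q,
          Q.eval (x : ℝ) * (p i).eval (x : ℝ)
          = (p j).eval ((q - 1 - x : ℕ) : ℝ) * (p i).eval ((q : ℝ) - 1 - ((q - 1 - x : ℕ) : ℝ)) := by
        intro x hx
        have hxq : x < q := Finset.mem_range.mp hx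
        have hc : ((q - 1 - x : ℕ) : ℝ) = (q : ℝ) - 1 - x := by
          have : (q - 1 - x : ℕ) = q - 1 - x := rfl
          push_cast [Nat.cast_sub (by omega : x ≤ q - 1), Nat.cast_sub (by omega : 1 ≤ q)]
          ring
        rw [hQeval, hc]
        ring_nf
      calc ∑ x ∈ Finset.range q, Q.eval (x : ℝ) * (p i).eval (x : ℝ)
          = ∑ x ∈ Finset.range q, (p j).eval ((q - 1 - x : ℕ) : ℝ) * (p i).eval ((q : ℝ) - 1 - ((q - 1 - x : ℕ) : ℝ)) :=
            Finset.sum_congr rfl hstep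
        _ = ∑ y ∈ Finset.range q, (p j).eval (y : ℝ) * (p i).eval ((q : ℝ) - 1 - (y : ℝ)) := hrefl
        _ = ∑ y ∈ Finset.range q, (p j).eval (y : ℝ) * ((-1 : ℝ) ^ i * (p i).eval (y : ℝ)) := by
            apply Finset.sum_congr rfl
            intro y hy
            rw [ih i hij hiq y hy]
        _ = (-1 : ℝ) ^ i * ∑ y ∈ Finset.range q, (p j).eval (y : ℝ) * (p i).eval (y : ℝ) := by
            rw [Finset.mul_sum]; apply Finset.sum_congr rfl; intros; ring
        _ = 0 := by
            rw [show ∑ y ∈ Finset.range q, (p j).eval (y : ℝ) * (p i).eval (y : ℝ)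
                = ∑ y ∈ Finset.range q, (p i).eval (y : ℝ) * (p j).eval (y : ℝ) by
                  apply Finset.sum_congr rfl; intros; ring,
              horth i hiq j hjq, if_neg (Nat.ne_of_lt hij)]
            ring
    have hpsum : ∑ x ∈ Finset.range q, (p j).eval (x : ℝ) * (p i).eval (x : ℝ) = 0 := by
      rw [show ∑ y ∈ Finset.range q, (p j).eval (y : ℝ) * (p i).eval (y : ℝ)
          = ∑ y ∈ Finset.range q, (p i).eval (y : ℝ) * (p j).eval (y : ℝ) by
            apply Finset.sum_congr rfl; intros; ring,
        horth i hiq j hjq, if_neg (Nat.ne_of_lt hij)]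
    simp only [hR, eval_sub, eval_smul, smul_eq_mul, sub_mul, Finset.sum_sub_distrib]
    rw [hQsum]
    rw [show ∑ x ∈ Finset.range q, (-1:ℝ)^j * (p j).eval (x : ℝ) * (p i).eval (x : ℝ)
        = (-1:ℝ)^j * ∑ x ∈ Finset.range q, (p j).eval (x : ℝ) * (p i).eval (x : ℝ) by
          rw [Finset.mul_sum]; apply Finset.sum_congr rfl; intros; ring, hpsum]
    ring
  -- R vanishes on the points
  obtain ⟨a, ha⟩ := span_aux q p hdeg j (le_of_lt hjq) R hRdeg
  have hsq : ∑ x ∈ Finset.range q, (R.eval (x : ℝ)) ^ 2 = 0 := by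
    have : ∀ x ∈ Finset.range q, (R.eval (x : ℝ)) ^ 2 = R.eval (x : ℝ) * R.eval (x : ℝ) := by
      intros; ring
    rw [Finset.sum_congr rfl this]
    calc ∑ x ∈ Finset.range q, R.eval (x : ℝ) * R.eval (x : ℝ)
        = ∑ x ∈ Finset.range q, R.eval (x : ℝ) * (∑ i ∈ Finset.range j, a i * (p i).eval (x : ℝ)) := by
          apply Finset.sum_congr rfl
          intro x hx
          congr 1
          conv_lhs => rw [ha]
          simp [eval_finset_sum, eval_smul, smul_eq_mul]
      _ = ∑ x ∈ Finset.range q, ∑ i ∈ Finset.range j, a i * (R.eval (x:ℝ) * (p i).eval (x:ℝ)) := by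
          apply Finset.sum_congr rfl; intros; rw [Finset.mul_sum]; apply Finset.sum_congr rfl; intros; ring
      _ = ∑ i ∈ Finset.range j, ∑ x ∈ Finset.range q, a i * (R.eval (x:ℝ) * (p i).eval (x:ℝ)) := Finset.sum_comm
      _ = ∑ i ∈ Finset.range j, a i * ∑ x ∈ Finset.range q, R.eval (x : ℝ) * (p i).eval (x : ℝ) := by
          apply Finset.sum_congr rfl; intros; rw [Finset.mul_sum]
      _ = 0 := by
          apply Finset.sum_eq_zero
          intro i hi
          rw [hRorth i (Finset.mem_range.mp hi)]
          ring
  intro x hx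
  have hRx : R.eval (x : ℝ) = 0 := by
    have hnn : ∀ x ∈ Finset.range q, (0:ℝ) ≤ (R.eval (x : ℝ)) ^ 2 := fun _ _ => sq_nonneg _
    have := (Finset.sum_eq_zero_iff_of_nonneg hnn).mp hsq x hx
    exact pow_eq_zero_iff (two_ne_zero) |>.mp this
  have := hRx
  simp only [hR, eval_sub, eval_smul, smul_eq_mul, sub_eq_zero] at this
  rw [← hQeval]
  exact this

lemma Wz_reflect (q : ℕ) [NeZero q] (hodd : Odd q) (y : ZMod q) :
    (Wz q ((((q - 1) / 2 : ℕ) : ZMod q) - y)).val = q - 1 - (Wz q y).val := by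
  obtain ⟨t, ht⟩ := hodd
  set a := y.val with hay
  have ha : a < q := ZMod.val_lt y
  have hmu : ((q - 1) / 2 : ℕ) = t := by omega
  set b : ℕ := if a ≤ t then t - a else 3 * t + 1 - a with hb
  have hbq : b < q := by rw [hb]; split_ifs <;> omega
  have hcast : (((q - 1) / 2 : ℕ) : ZMod q) - y = (b : ZMod q) := by
    have hy : ((a : ℕ) : ZMod q) = y := ZMod.natCast_rightInverse y
    rw [hmu, hb]
    split_ifs with hat
    · rw [Nat.cast_sub hat, hy]
    · have h1 : ((3 * t + 1 - a : ℕ) : ZMod q) = ((3 * t + 1 : ℕ) : ZMod q) - a := by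
        rw [Nat.cast_sub (by omega)]
      rw [h1, hy]
      have h2 : ((3 * t + 1 : ℕ) : ZMod q) = ((q : ℕ) : ZMod q) + ((t : ℕ) : ZMod q) := by
        rw [← Nat.cast_add]; congr 1; omega
      rw [h2, ZMod.natCast_self, zero_add]
  rw [hcast]
  unfold Wz
  rw [ZMod.val_cast_of_lt hbq]
  have hW : Wnat q b < q := by unfold Wnat; split_ifs <;> omega
  have hW2 : Wnat q a < q := by unfold Wnat; split_ifs <;> omega
  rw [ZMod.val_cast_of_lt hW, ← hay, ZMod.val_cast_of_lt hW2]
  unfold Wnat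
  rw [hb]
  split_ifs <;> omega


lemma two_gamma (q : ℕ) (hodd : Odd q) :
    ((2 * gammaNat q : ℕ) : ZMod q) = (((q - 1) / 2 : ℕ) : ZMod q) := by
  obtain ⟨t, ht⟩ := hodd
  have h4 : q % 4 = 1 ∨ q % 4 = 3 := by omega
  rcases h4 with h | h
  · have : 2 * gammaNat q = (q - 1) / 2 := by unfold gammaNat; rw [if_pos h]; omega
    rw [this]
  · have h1 : 2 * gammaNat q = q + (q - 1) / 2 := by unfold gammaNat; rw [if_neg (by omega)]; omega
    rw [h1, Nat.cast_add, ZMod.natCast_self, zero_add]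


lemma regDesignB_reflect {q k m : ℕ} [NeZero q] (hodd : Odd q)
    (c : Fin m → Fin k → ZMod q) (x : Fin k → ZMod q) (col : Fin k ⊕ Fin m) :
    regDesignB c (bstar c) (fun j => (((q - 1) / 2 : ℕ) : ZMod q) - x j) col
      = (((q - 1) / 2 : ℕ) : ZMod q) - regDesignB c (bstar c) x col := by
  set μ : ZMod q := (((q - 1) / 2 : ℕ) : ZMod q) with hμ
  have h2g : (2 : ZMod q) * ((gammaNat q : ℕ) : ZMod q) = μ := by
    rw [hμ, ← two_gamma q hodd]; push_cast; ring
  cases col with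
  | inl j => simp [regDesignB]
  | inr i =>
    simp only [regDesignB, Sum.elim_inr, bstar]
    have hsum : ∑ j, c i j * (μ - x j) = (∑ j, c i j) * μ - ∑ j, c i j * x j := by
      rw [Finset.sum_mul, ← Finset.sum_sub_distrib]
      apply Finset.sum_congr rfl; intros; ring
    rw [hsum]
    linear_combination (1 - ∑ j, c i j) * h2g

end AuxLemmas

/-- Theorem 1: For an odd prime `q` and the regular `q^{n-m}` design
with generators `c`, the design `E_{b*} = W(D_{b*})` satisfies `β₃(E_{b*}) = 0` for
every family of orthonormal polynomials on `Z_q`. -/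
theorem statement0 (q n m : ℕ) [NeZero q] (hq : q.Prime) (hodd : Odd q)
    (hm : 1 ≤ m) (hmn : m < n) (c : Fin m → Fin (n - m) → ZMod q)
    (p : ℕ → Polynomial ℝ) (hp : IsOrthonormalFamily q p) :
    betaWL q p 3 (Eb c (bstar c)) = 0 := by
  classical
  have hq1 : 1 ≤ q := Nat.one_le_iff_ne_zero.mpr (NeZero.ne q)
  set μ : ZMod q := (((q - 1) / 2 : ℕ) : ZMod q) with hμ
  -- the reflection on rows
  have hinv : Function.Involutive (fun x : Fin (n - m) → ZMod q => fun j : Fin (n - m) => μ - x j) := by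
    intro x; funext j; simp
  set e : Equiv.Perm (Fin (n - m) → ZMod q) := hinv.toPerm _ with he
  -- pointwise reflection of entries
  have hval : ∀ (x : Fin (n - m) → ZMod q) (col : Fin (n - m) ⊕ Fin m),
      (Eb c (bstar c) (fun j : Fin (n - m) => μ - x j) col).val
        = q - 1 - (Eb c (bstar c) x col).val := by
    intro x col
    show (Wz q (regDesignB c (bstar c) (fun j : Fin (n - m) => μ - x j) col)).val
        = q - 1 - (Wz q (regDesignB c (bstar c) x col)).val
    rw [hμ]
    rw [regDesignB_reflect hodd c x col]
    exact Wz_reflect q hodd (regDesignB c (bstar c) x col)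
  have hvlt : ∀ (x : Fin (n - m) → ZMod q) (col : Fin (n - m) ⊕ Fin m),
      (Eb c (bstar c) x col).val < q := fun x col => ZMod.val_lt _
  -- inner sums vanish
  have hzero : ∀ u ∈ Finset.univ.filter
      (fun u : Fin (n - m) ⊕ Fin m → Fin q => (∑ j, (u j : ℕ)) = 3),
      (∑ x : Fin (n - m) → ZMod q, ∏ col : Fin (n - m) ⊕ Fin m,
        (p (u col : ℕ)).eval (((Eb c (bstar c) x col).val : ℕ) : ℝ)) = 0 := by
    intro u hu
    have hu3 : (∑ j, (u j : ℕ)) = 3 := (Finset.mem_filter.mp hu).2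
    set F : (Fin (n - m) → ZMod q) → ℝ := fun x => ∏ col : Fin (n - m) ⊕ Fin m,
        (p (u col : ℕ)).eval (((Eb c (bstar c) x col).val : ℕ) : ℝ) with hF
    have hFneg : ∀ x, F (e x) = -F x := by
      intro x
      have hcol : ∀ col : Fin (n - m) ⊕ Fin m,
          (p (u col : ℕ)).eval (((Eb c (bstar c) (e x) col).val : ℕ) : ℝ)
            = (-1 : ℝ) ^ (u col : ℕ) *
              (p (u col : ℕ)).eval (((Eb c (bstar c) x col).val : ℕ) : ℝ) := by
        intro col
        have h1 : (Eb c (bstar c) (e x) col).val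
            = q - 1 - (Eb c (bstar c) x col).val := hval x col
        have h2 : (((q - 1 - (Eb c (bstar c) x col).val : ℕ)) : ℝ)
            = (q : ℝ) - 1 - (((Eb c (bstar c) x col).val : ℕ) : ℝ) := by
          have := hvlt x col
          push_cast [Nat.cast_sub (by omega : (Eb c (bstar c) x col).val ≤ q - 1),
            Nat.cast_sub (by omega : 1 ≤ q)]
          ring
        rw [h1, h2]
        exact reflect_eval q p hp (u col : ℕ) (u col).isLt _
          (Finset.mem_range.mpr (hvlt x col))
      calc F (e x) = ∏ col : Fin (n - m) ⊕ Fin m, ((-1 : ℝ) ^ (u col : ℕ) *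
              (p (u col : ℕ)).eval (((Eb c (bstar c) x col).val : ℕ) : ℝ)) :=
            Finset.prod_congr rfl (fun col _ => hcol col)
        _ = (∏ col : Fin (n - m) ⊕ Fin m, (-1 : ℝ) ^ (u col : ℕ)) * F x := Finset.prod_mul_distrib
        _ = -F x := by
            rw [Finset.prod_pow_eq_pow_sum, hu3]
            ring
    have hsum : ∑ x : Fin (n - m) → ZMod q, F x = ∑ x : Fin (n - m) → ZMod q, F (e x) :=
      (Equiv.sum_comp e F).symm
    have hneg : ∑ x : Fin (n - m) → ZMod q, F x = -∑ x : Fin (n - m) → ZMod q, F x := by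
      calc ∑ x : Fin (n - m) → ZMod q, F x = ∑ x : Fin (n - m) → ZMod q, F (e x) := hsum
        _ = ∑ x : Fin (n - m) → ZMod q, -F x := Finset.sum_congr rfl (fun x _ => hFneg x)
        _ = -∑ x : Fin (n - m) → ZMod q, F x := by rw [Finset.sum_neg_distrib]
    linarith [hneg]
  unfold betaWL
  rw [Finset.sum_eq_zero (fun u hu => by rw [hzero u hu]; ring), mul_zero]
end

section
/- Let q be an odd prime, let D be the regular q^{n-m} design with generators (c_{ij}), and let E_{b*} = W(D_{b*}). Then E_{b*} is mirror-symmetric: a vector y = (y_1,...,y_n) ∈ Z_q^n occurs as a row of E_{b*} if and only if ((q-1)-y_1, ..., (q-1)-y_n) occurs as a row of E_{b*}. -/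
open Finset Real

/-!
With `g = (q-1)/2`, the Williams transformation satisfies `W(z) + W(g - z) = q - 1` on `Z_q`.
Since `2 γ ≡ g (mod q)`, the shift `b*` is chosen exactly so that replacing the independent
coordinates `x` by `g - x` replaces every column `d` of `D_{b*}` by `g - d`. Applying `W`
entrywise, this involution of the runs turns each row `y` of `E_{b*}` into `(q-1) - y`.
-/

lemma Wnat_add_Wnat_of_add_eq {q : ℕ} (hodd : Odd q) {a b : ℕ} (ha : a < q) (hb : b < q)
    (hab : a + b = (q - 1) / 2 ∨ a + b = (q - 1) / 2 + q) :
    Wnat q a + Wnat q b = q - 1 := by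
  obtain ⟨k, rfl⟩ := hodd
  unfold Wnat
  split_ifs <;> omega

lemma Wz_add_Wz_of_add_eq {q : ℕ} (hodd : Odd q) {z w : ZMod q}
    (hzw : z + w = ((q - 1) / 2 : ℕ)) : Wz q z + Wz q w = -1 := by
  have : NeZero q := ⟨hodd.pos.ne'⟩
  have hval : (z + w).val = (q - 1) / 2 := by
    rw [hzw, ZMod.val_cast_of_lt (by have := hodd.pos; omega)]
  have hsum : z.val + w.val = (q - 1) / 2 ∨ z.val + w.val = (q - 1) / 2 + q := by
    rcases lt_or_ge (z.val + w.val) q with h | h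
    · rw [ZMod.val_add_of_lt h] at hval
      omega
    · rw [ZMod.val_add_of_le h] at hval
      omega
  have hW := Wnat_add_Wnat_of_add_eq hodd (ZMod.val_lt z) (ZMod.val_lt w) hsum
  unfold Wz
  rw [← Nat.cast_add, hW, Nat.cast_pred hodd.pos, ZMod.natCast_self, zero_sub]

lemma two_mul_gammaNat_cast {q : ℕ} (hodd : Odd q) :
    (2 * gammaNat q : ZMod q) = ((q - 1) / 2 : ℕ) := by
  have h2 : q % 2 = 1 := Nat.odd_iff.mp hodd
  have hγ : 2 * gammaNat q = (q - 1) / 2 ∨ 2 * gammaNat q = (q - 1) / 2 + q := by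
    unfold gammaNat
    split_ifs <;> omega
  rw [← Nat.cast_ofNat, ← Nat.cast_mul]
  rcases hγ with h | h <;> simp [h]

lemma regDesignB_bstar_reflect_add {q k m : ℕ} (hodd : Odd q) (c : Fin m → Fin k → ZMod q)
    (x : Fin k → ZMod q) (col : Fin k ⊕ Fin m) :
    regDesignB c (bstar c) (fun j => ((q - 1) / 2 : ℕ) - x j) col +
      regDesignB c (bstar c) x col = ((q - 1) / 2 : ℕ) := by
  cases col with
  | inl j => simp [regDesignB]
  | inr i =>
    simp only [regDesignB, Sum.elim_inr, bstar, mul_sub, sum_sub_distrib, ← sum_mul]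
    linear_combination (1 - ∑ j, c i j) * two_mul_gammaNat_cast hodd

lemma exists_Eb_bstar_eq_neg_one_sub {q k m : ℕ} (hodd : Odd q) (c : Fin m → Fin k → ZMod q)
    {y : Fin k ⊕ Fin m → ZMod q} (hy : ∃ x, ∀ col, Eb c (bstar c) x col = y col) :
    ∃ x, ∀ col, Eb c (bstar c) x col = -1 - y col := by
  obtain ⟨x, hx⟩ := hy
  refine ⟨fun j => ((q - 1) / 2 : ℕ) - x j, fun col => ?_⟩
  rw [← hx col, eq_sub_iff_add_eq]
  exact Wz_add_Wz_of_add_eq hodd (regDesignB_bstar_reflect_add hodd c x col)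

theorem statement2_general (q n m : ℕ) (hodd : Odd q)
    (c : Fin m → Fin (n - m) → ZMod q)
    (y : Fin (n - m) ⊕ Fin m → ZMod q) :
    (∃ x, ∀ col, Eb c (bstar c) x col = y col) ↔
      (∃ x, ∀ col, Eb c (bstar c) x col = -1 - y col) := by
  refine ⟨exists_Eb_bstar_eq_neg_one_sub hodd c, fun h => ?_⟩
  simpa only [sub_sub_cancel] using exists_Eb_bstar_eq_neg_one_sub hodd c h

/-- Theorem 4: For an odd prime `q`, the design `E_{b*} = W(D_{b*})`
is mirror-symmetric: a vector `y` occurs as a row of `E_{b*}` if and only if the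
vector `(q-1) - y` (entrywise, i.e. `-1 - y` in `ZMod q`) occurs as a row of
`E_{b*}`. -/
theorem statement2 (q n m : ℕ) [NeZero q] (hq : q.Prime) (hodd : Odd q)
    (hm : 1 ≤ m) (hmn : m < n) (c : Fin m → Fin (n - m) → ZMod q)
    (y : Fin (n - m) ⊕ Fin m → ZMod q) :
    (∃ x, ∀ col, Eb c (bstar c) x col = y col) ↔
      (∃ x, ∀ col, Eb c (bstar c) x col = -1 - y col) :=
  statement2_general q n m hodd c y
end

section
/- Let q ≥ 2 and let A be an N × n array with entries in Z_q that is an orthogonal array of strength t ≥ 1. Then for every family of orthonormal polynomials on Z_q and every integer k with 1 ≤ k ≤ t, β_k(A) = 0. -/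
/-!
A word `u` of weight `k ≤ t` involves at most `t` columns; enlarge them to a set of exactly `t`
columns. Since the product `∏ⱼ p_{uⱼ}(aᵢⱼ)` only depends on the entries of row `i` in those
columns, and by strength `t` every level combination occurs there equally often, the row sum is
a multiple of `∑_{v ∈ Z_q^t} ∏ₗ p_{uₗ}(vₗ) = ∏ₗ ∑ₓ p_{uₗ}(x)`. One factor has `uₗ ≠ 0`, and
`∑ₓ p_{uₗ}(x) = ∑ₓ p_{uₗ}(x) p₀(x) = 0` by orthogonality.
-/

open Finset

/-- An `N × n` array with entries in `Z_q` is an orthogonal array of strength `t` if in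
every `N × t` subarray formed by `t` of its columns, each of the `q^t` level
combinations occurs exactly `N / q^t` times among the rows. -/
def IsOA (q N n t : ℕ) (A : Fin N → Fin n → ZMod q) : Prop :=
  ∀ s : Fin t → Fin n, Function.Injective s → ∀ v : Fin t → ZMod q,
    (Finset.univ.filter fun i : Fin N => ∀ j, A i (s j) = v j).card * q ^ t = N

theorem Fintype.sum_comp_eq_sum_card_fiber_nsmul {ι κ M : Type*} [Fintype ι] [Fintype κ]
    [DecidableEq κ] [AddCommMonoid M] (g : ι → κ) (f : κ → M) :
    ∑ i, f (g i) = ∑ b, #{i | g i = b} • f b := by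
  rw [← Finset.sum_fiberwise univ g fun i => f (g i)]
  refine Finset.sum_congr rfl fun b _ => ?_
  rw [Finset.sum_congr rfl fun i hi => congrArg f (mem_filter.1 hi).2, sum_const]

theorem Fintype.card_filter_ne_zero_le_sum {ι : Type*} [Fintype ι] (u : ι → ℕ) :
    #{j | u j ≠ 0} ≤ ∑ j, u j :=
  calc #{j | u j ≠ 0} = ∑ _j ∈ {j | u j ≠ 0}, 1 := Finset.card_eq_sum_ones _
    _ ≤ ∑ j ∈ {j | u j ≠ 0}, u j :=
      sum_le_sum fun _ hj => Nat.one_le_iff_ne_zero.2 (mem_filter.1 hj).2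
    _ ≤ ∑ j, u j := sum_le_sum_of_subset (subset_univ _)

theorem Finset.exists_injective_subset_range {α : Type*} [Fintype α] [LinearOrder α]
    (S : Finset α) {t : ℕ} (hSt : #S ≤ t) (htα : t ≤ Fintype.card α) :
    ∃ s : Fin t → α, Function.Injective s ∧ ↑S ⊆ Set.range s := by
  obtain ⟨T, hST, hT⟩ := exists_superset_card_eq hSt htα
  exact ⟨T.orderEmbOfFin hT, (T.orderEmbOfFin hT).injective, by
    rw [range_orderEmbOfFin]; exact_mod_cast hST⟩

theorem ZMod.sum_comp_val {q : ℕ} [NeZero q] {M : Type*} [AddCommMonoid M] (f : ℕ → M) :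
    ∑ x : ZMod q, f x.val = ∑ m ∈ range q, f m :=
  sum_nbij' ZMod.val Nat.cast (fun x _ => mem_range.2 (ZMod.val_lt x)) (fun _ _ => mem_univ _)
    (fun x _ => ZMod.natCast_zmod_val x) (fun _ hm => ZMod.val_cast_of_lt (mem_range.1 hm))
    (fun _ _ => rfl)

theorem IsOrthonormalFamily.sum_eval_eq_zero {q : ℕ} [NeZero q] {p : ℕ → Polynomial ℝ}
    (hp : IsOrthonormalFamily q p) {j : ℕ} (hj0 : j ≠ 0) (hjq : j < q) :
    ∑ x : ZMod q, (p j).eval (x.val : ℝ) = 0 := by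
  obtain ⟨hp0, -, horth⟩ := hp
  have h := horth j hjq 0 (NeZero.pos q)
  rw [if_neg hj0] at h
  rw [ZMod.sum_comp_val fun m : ℕ => (p j).eval (m : ℝ), ← h]
  simp [hp0]

theorem IsOA.sum_comp_mul_pow {q N n t : ℕ} [NeZero q] {A : Fin N → Fin n → ZMod q}
    (hA : IsOA q N n t A) {s : Fin t → Fin n} (hs : Function.Injective s)
    (f : (Fin t → ZMod q) → ℝ) :
    (∑ i, f (fun j => A i (s j))) * (q : ℝ) ^ t = N * ∑ v, f v := by
  rw [Fintype.sum_comp_eq_sum_card_fiber_nsmul, sum_mul, mul_sum]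
  refine sum_congr rfl fun v _ => ?_
  have hcount := hA s hs v
  simp only [← funext_iff] at hcount
  rw [nsmul_eq_mul, mul_right_comm]
  congr 1
  exact_mod_cast hcount

theorem IsOA.sum_prod_eval_eq_zero {q N n t : ℕ} [NeZero q] {A : Fin N → Fin n → ZMod q}
    (hA : IsOA q N n t A) (htn : t ≤ n) {p : ℕ → Polynomial ℝ} (hp : IsOrthonormalFamily q p)
    {u : Fin n → Fin q} (hu0 : u ≠ 0) (hut : ∑ j, (u j : ℕ) ≤ t) :
    ∑ i, ∏ j, (p (u j : ℕ)).eval ((A i j).val : ℝ) = 0 := by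
  obtain ⟨s, hs, hsupp⟩ := Finset.exists_injective_subset_range {j | (u j : ℕ) ≠ 0}
    ((Fintype.card_filter_ne_zero_le_sum _).trans hut) (by simpa using htn)
  have hu_out : ∀ j ∉ Set.range s, (u j : ℕ) = 0 := fun j hj =>
    by_contra fun h => hj (hsupp (by simpa using h))
  -- columns outside the range of `s` contribute the factor `p 0 = 1`
  have hprod : ∀ w : Fin n → ZMod q, ∏ j, (p (u j : ℕ)).eval ((w j).val : ℝ) =
      ∏ l, (p (u (s l) : ℕ)).eval ((w (s l)).val : ℝ) := fun w =>
    (Fintype.prod_of_injective s hs _ _ (fun j hj => by simp [hu_out j hj, hp.1])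
      fun _ => rfl).symm
  have hfactor : ∑ v : Fin t → ZMod q, ∏ l, (p (u (s l) : ℕ)).eval ((v l).val : ℝ) = 0 := by
    rw [← Fintype.prod_sum fun l (x : ZMod q) => (p (u (s l) : ℕ)).eval (x.val : ℝ)]
    obtain ⟨j, hj⟩ := Function.ne_iff.1 hu0
    have hj : (u j : ℕ) ≠ 0 := fun h => hj (Fin.ext (by simp [h]))
    obtain ⟨l, rfl⟩ : j ∈ Set.range s := hsupp (by simpa using hj)
    exact prod_eq_zero (mem_univ l) (hp.sum_eval_eq_zero hj (u (s l)).2)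
  have hq : (q : ℝ) ^ t ≠ 0 := pow_ne_zero _ (Nat.cast_ne_zero.2 (NeZero.ne q))
  have hcount := hA.sum_comp_mul_pow hs fun v => ∏ l, (p (u (s l) : ℕ)).eval ((v l).val : ℝ)
  rw [hfactor, mul_zero] at hcount
  simp_rw [hprod]
  exact (mul_eq_zero.1 hcount).resolve_right hq

theorem statement4_general (q N n t : ℕ) [NeZero q] (htn : t ≤ n)
    (A : Fin N → Fin n → ZMod q) (hA : IsOA q N n t A)
    (p : ℕ → Polynomial ℝ) (hp : IsOrthonormalFamily q p)
    (k : ℕ) (hk1 : 1 ≤ k) (hkt : k ≤ t) :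
    betaWL q p k A = 0 := by
  refine mul_eq_zero_of_right _ (sum_eq_zero fun u hu => ?_)
  have hu : ∑ j, (u j : ℕ) = k := (mem_filter.1 hu).2
  have hu0 : u ≠ 0 := by
    rintro rfl
    simp only [Pi.zero_apply, Fin.val_zero, sum_const_zero] at hu
    omega
  rw [hA.sum_prod_eval_eq_zero htn hp hu0 (hu.trans_le hkt), zero_pow two_ne_zero]

/-- Lemma 1: For an orthogonal array of strength `t ≥ 1`,
`β_k = 0` for `k = 1, ..., t`, for every family of orthonormal polynomials. -/
theorem statement4 (q N n t : ℕ) [NeZero q] (hq : 2 ≤ q) (ht : 1 ≤ t) (htn : t ≤ n)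
    (A : Fin N → Fin n → ZMod q) (hA : IsOA q N n t A)
    (p : ℕ → Polynomial ℝ) (hp : IsOrthonormalFamily q p)
    (k : ℕ) (hk1 : 1 ≤ k) (hkt : k ≤ t) :
    betaWL q p k A = 0 :=
  statement4_general q N n t htn A hA p hp k hk1 hkt
end

section
/- Let q be an odd prime, let D be the regular q^{n-m} design with generators (c_{ij}), let b ∈ Z_q^m, and set e = b - b* (mod q). Then D_b is the same design as D_e + γ: the set of rows of D_b equals the set {(y_1 + γ, ..., y_n + γ) mod q : (y_1,...,y_n) is a row of D_e}. -/
open Finset Real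

/-- Lemma 3: For an odd prime `q` and the regular `q^{n-m}` design
with generators `c`, for any `b`, the design `D_b` is the same design as
`D_e + γ (mod q)` where `e = b - b*`: a vector `y` occurs as a row of `D_b` if and
only if `y` can be obtained by adding `γ` to each entry of some row of `D_e`. -/
theorem statement6 (q n m : ℕ) [NeZero q] (hq : q.Prime) (hodd : Odd q)
    (hm : 1 ≤ m) (hmn : m < n) (c : Fin m → Fin (n - m) → ZMod q)
    (b : Fin m → ZMod q) (y : Fin (n - m) ⊕ Fin m → ZMod q) :
    (∃ x, ∀ col, regDesignB c b x col = y col) ↔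
      (∃ x, ∀ col, regDesignB c (b - bstar c) x col + (gammaNat q : ZMod q) = y col) := by
  set g : ZMod q := (gammaNat q : ZMod q) with hg
  constructor
  · rintro ⟨x, hx⟩
    refine ⟨fun j => x j - g, fun col => ?_⟩
    cases col with
    | inl j => simpa [regDesignB] using hx (Sum.inl j)
    | inr i =>
      have := hx (Sum.inr i)
      simp only [regDesignB, Sum.elim_inr, bstar, Pi.sub_apply, ← hg] at this ⊢
      rw [← this]
      simp only [mul_sub, Finset.sum_sub_distrib, ← Finset.sum_mul]
      ring
  · rintro ⟨x, hx⟩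
    refine ⟨fun j => x j + g, fun col => ?_⟩
    cases col with
    | inl j => simpa [regDesignB] using hx (Sum.inl j)
    | inr i =>
      have := hx (Sum.inr i)
      simp only [regDesignB, Sum.elim_inr, bstar, Pi.sub_apply, ← hg] at this ⊢
      rw [← this]
      simp only [mul_add, Finset.sum_add_distrib, ← Finset.sum_mul]
      ring
end

section
/- Let q be an odd prime, let ρ = sqrt(12/((q+1)(q-1))), and let p_1(x) = ρ(x - (q-1)/2). Then for every x ∈ {0, 1, ..., q-1}, p_1(x) = -(ρ/(2q)) Σ_{v=0}^{q-1} g(v) cos((2v+1)π(x+1/2)/q). -/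
open Finset Real

/-- `g(v) = cos(π(v+1/2)/q) / (sin(π(v+1/2)/q))²`. -/
noncomputable def gfun (q : ℕ) (v : ℤ) : ℝ :=
  Real.cos (π * ((v : ℝ) + 1 / 2) / q) / Real.sin (π * ((v : ℝ) + 1 / 2) / q) ^ 2

/-!
Write `θᵥ = π(v + 1/2)/q` and `F(m) = ∑_{v<q} cos(2mθᵥ) / sin²θᵥ`. Since
`cos 2mθ - cos 2(m+1)θ = 2 sin((2m+1)θ) sin θ` and the Dirichlet-kernel sum
`∑_{v<q} sin((2m+1)θᵥ) / sin θᵥ` equals `q` for `m < q`, `F` drops by `2q` at each step up to `q`.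
As `cos(2qθᵥ) = -1`, also `F(q) = -F(0)`; hence `F(m) = q² - 2qm`. The sum in the theorem is
`(F(x) + F(x+1))/2 = q² - q - 2qx`, because `2 cos θ cos((2x+1)θ) = cos 2xθ + cos 2(x+1)θ`.
-/

noncomputable def chebAngle (q v : ℕ) : ℝ := π * (v + 1 / 2) / q

noncomputable def cosCscSqSum (q m : ℕ) : ℝ :=
  ∑ v ∈ range q, cos (2 * m * chebAngle q v) / sin (chebAngle q v) ^ 2

lemma sin_chebAngle_pos {q v : ℕ} (hv : v < q) : 0 < sin (chebAngle q v) := by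
  have hq : (0 : ℝ) < q := by exact_mod_cast (Nat.zero_le v).trans_lt hv
  have hvq : (v : ℝ) + 1 ≤ q := by exact_mod_cast hv
  apply sin_pos_of_pos_of_lt_pi
  · unfold chebAngle; positivity
  · rw [chebAngle, div_lt_iff₀ hq]; nlinarith [pi_pos]

lemma two_mul_sin_mul_sum_range_cos (a : ℝ) (n : ℕ) :
    2 * sin a * ∑ v ∈ range n, cos ((2 * v + 1) * a) = sin (2 * n * a) := by
  induction n with
  | zero => simp
  | succ n ih =>
    rw [sum_range_succ, mul_add, ih, show 2 * ((n + 1 : ℕ) : ℝ) * a = (2 * n + 1) * a + a by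
      push_cast; ring, show 2 * (n : ℝ) * a = (2 * n + 1) * a - a by ring, sin_add, sin_sub]
    ring

lemma sum_range_cos_two_mul_chebAngle {q k : ℕ} (hk : 0 < k) (hkq : k < q) :
    ∑ v ∈ range q, cos (2 * k * chebAngle q v) = 0 := by
  have hq : (0 : ℝ) < q := by exact_mod_cast hk.trans hkq
  have hsin : sin (k * π / q) ≠ 0 := by
    refine (sin_pos_of_pos_of_lt_pi (by positivity) ?_).ne'
    rw [div_lt_iff₀ hq]
    have : (k : ℝ) < q := by exact_mod_cast hkq
    nlinarith [pi_pos]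
  have htelescope := two_mul_sin_mul_sum_range_cos (k * π / q) q
  rw [show 2 * (q : ℝ) * (k * π / q) = (2 * k : ℕ) * π by push_cast; field_simp,
    sin_nat_mul_pi] at htelescope
  have hangle : ∀ v : ℕ, 2 * (k : ℝ) * chebAngle q v = (2 * v + 1) * (k * π / q) := fun v => by
    unfold chebAngle; ring
  simp_rw [hangle]
  exact (mul_eq_zero.mp htelescope).resolve_left (mul_ne_zero two_ne_zero hsin)

lemma sum_range_sin_odd_mul_chebAngle_div_sin {q m : ℕ} (hm : m < q) :
    ∑ v ∈ range q, sin ((2 * m + 1) * chebAngle q v) / sin (chebAngle q v) = q := by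
  induction m with
  | zero =>
    simp only [CharP.cast_eq_zero, mul_zero, zero_add, one_mul]
    rw [sum_congr rfl fun v hv => div_self (sin_chebAngle_pos (mem_range.mp hv)).ne']
    simp
  | succ m ih =>
    have hstep : ∀ v ∈ range q,
        sin ((2 * (m + 1 : ℕ) + 1) * chebAngle q v) / sin (chebAngle q v) =
          sin ((2 * m + 1) * chebAngle q v) / sin (chebAngle q v) +
            2 * cos (2 * (m + 1 : ℕ) * chebAngle q v) := by
      intro v hv
      set θ := chebAngle q v
      have hs : sin θ ≠ 0 := (sin_chebAngle_pos (mem_range.mp hv)).ne'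
      rw [show (2 * ((m + 1 : ℕ) : ℝ) + 1) * θ = 2 * (m + 1 : ℕ) * θ + θ by ring,
        show (2 * (m : ℝ) + 1) * θ = 2 * (m + 1 : ℕ) * θ - θ by push_cast; ring, sin_add, sin_sub]
      field_simp
      ring
    rw [sum_congr rfl hstep, sum_add_distrib, ih (by omega), ← mul_sum,
      sum_range_cos_two_mul_chebAngle m.succ_pos hm, mul_zero, add_zero]

lemma cosCscSqSum_succ {q m : ℕ} (hm : m < q) :
    cosCscSqSum q (m + 1) = cosCscSqSum q m - 2 * q := by
  rw [cosCscSqSum, cosCscSqSum, ← sum_range_sin_odd_mul_chebAngle_div_sin hm, mul_sum,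
    ← sum_sub_distrib]
  refine sum_congr rfl fun v hv => ?_
  set θ := chebAngle q v
  have hs : sin θ ≠ 0 := (sin_chebAngle_pos (mem_range.mp hv)).ne'
  rw [show 2 * ((m + 1 : ℕ) : ℝ) * θ = (2 * m + 1) * θ + θ by push_cast; ring,
    show 2 * (m : ℝ) * θ = (2 * m + 1) * θ - θ by ring, cos_add, cos_sub]
  field_simp
  ring

lemma cosCscSqSum_eq_sub {q m : ℕ} (hm : m ≤ q) :
    cosCscSqSum q m = cosCscSqSum q 0 - 2 * q * m := by
  induction m with
  | zero => simp
  | succ m ih =>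
    rw [cosCscSqSum_succ hm, ih (by omega)]
    push_cast
    ring

lemma cosCscSqSum_self (q : ℕ) : cosCscSqSum q q = -cosCscSqSum q 0 := by
  rcases q.eq_zero_or_pos with rfl | hq
  · simp [cosCscSqSum]
  have hq' : (q : ℝ) ≠ 0 := by positivity
  rw [cosCscSqSum, cosCscSqSum, ← sum_neg_distrib]
  refine sum_congr rfl fun v _ => ?_
  rw [show 2 * (q : ℝ) * chebAngle q v = v * (2 * π) + π by unfold chebAngle; field_simp,
    cos_add_pi, cos_nat_mul_two_pi]
  simp [neg_div]

lemma cosCscSqSum_zero (q : ℕ) : cosCscSqSum q 0 = q ^ 2 := by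
  have h := cosCscSqSum_eq_sub (q := q) le_rfl
  rw [cosCscSqSum_self] at h
  linarith

lemma sum_cos_mul_cos_odd_mul_chebAngle_div_sin_sq {q x : ℕ} (hx : x < q) :
    ∑ v ∈ range q, cos (chebAngle q v) / sin (chebAngle q v) ^ 2 *
        cos ((2 * x + 1) * chebAngle q v) = q ^ 2 - q - 2 * q * x := by
  have hhalf : ∑ v ∈ range q, cos (chebAngle q v) / sin (chebAngle q v) ^ 2 *
      cos ((2 * x + 1) * chebAngle q v) = (cosCscSqSum q x + cosCscSqSum q (x + 1)) / 2 := by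
    rw [cosCscSqSum, cosCscSqSum, ← sum_add_distrib, sum_div]
    refine sum_congr rfl fun v _ => ?_
    set θ := chebAngle q v
    rw [show 2 * ((x + 1 : ℕ) : ℝ) * θ = (2 * x + 1) * θ + θ by push_cast; ring,
      show 2 * (x : ℝ) * θ = (2 * x + 1) * θ - θ by ring, cos_add, cos_sub]
    ring
  rw [hhalf, cosCscSqSum_eq_sub hx.le, cosCscSqSum_eq_sub hx, cosCscSqSum_zero]
  push_cast
  ring

theorem statement8_general (q : ℕ) (x : ℕ) (hx : x < q) :
    Real.sqrt (12 / (((q : ℝ) + 1) * ((q : ℝ) - 1))) * ((x : ℝ) - ((q : ℝ) - 1) / 2) =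
      -(Real.sqrt (12 / (((q : ℝ) + 1) * ((q : ℝ) - 1))) / (2 * q)) *
        ∑ v ∈ Finset.range q,
          gfun q v * Real.cos ((2 * (v : ℝ) + 1) * π * ((x : ℝ) + 1 / 2) / q) := by
  have hq : (q : ℝ) ≠ 0 := by
    have : 0 < q := (Nat.zero_le x).trans_lt hx
    positivity
  have hterm : ∀ v ∈ range q,
      gfun q v * cos ((2 * (v : ℝ) + 1) * π * ((x : ℝ) + 1 / 2) / q) =
        cos (chebAngle q v) / sin (chebAngle q v) ^ 2 * cos ((2 * x + 1) * chebAngle q v) := by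
    intro v _
    rw [gfun, chebAngle, Int.cast_natCast]
    ring_nf
  rw [sum_congr rfl hterm, sum_cos_mul_cos_odd_mul_chebAngle_div_sin_sq hx]
  field_simp
  ring

/-- Lemma 6: For an odd prime `q`, with `ρ = √(12/((q+1)(q-1)))` and
`p₁(x) = ρ(x - (q-1)/2)`, for every `x ∈ {0, ..., q-1}`,
`p₁(x) = -(ρ/(2q)) ∑_{v=0}^{q-1} g(v) cos((2v+1)π(x+1/2)/q)`. -/
theorem statement8 (q : ℕ) (hq : q.Prime) (hodd : Odd q) (x : ℕ) (hx : x < q) :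
    Real.sqrt (12 / (((q : ℝ) + 1) * ((q : ℝ) - 1))) * ((x : ℝ) - ((q : ℝ) - 1) / 2) =
      -(Real.sqrt (12 / (((q : ℝ) + 1) * ((q : ℝ) - 1))) / (2 * q)) *
        ∑ v ∈ Finset.range q,
          gfun q v * Real.cos ((2 * (v : ℝ) + 1) * π * ((x : ℝ) + 1 / 2) / q) :=
  statement8_general q x hx
end

section
/- Let q ≥ 2 be an integer. Then for every x ∈ {0, 1, ..., q-1} and every integer v, cos((2v+1)π(W(x)+1/2)/q) = cos((2v+1)π(2x+1/2)/q). -/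
open Real

/-- For every integer `q ≥ 2`, every `x ∈ {0, ..., q-1}` and every
integer `v`, `cos((2v+1)π(W(x)+1/2)/q) = cos((2v+1)π(2x+1/2)/q)`. -/
theorem statement12 (q : ℕ) (hq : 2 ≤ q) (x : ℕ) (hx : x < q) (v : ℤ) :
    Real.cos ((2 * (v : ℝ) + 1) * π * ((Wnat q x : ℝ) + 1 / 2) / q) =
      Real.cos ((2 * (v : ℝ) + 1) * π * (2 * (x : ℝ) + 1 / 2) / q) := by
  unfold Wnat
  split_ifs with h
  · push_cast
    ring_nf
  · 
    have hq0 : (q : ℝ) ≠ 0 := by positivity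
    have hle : q ≤ 2 * x := le_of_not_gt h
    have hx1 : x ≤ q := le_of_lt hx
    have h1 : 1 ≤ 2 * (q - x) := by omega
    have hcast : ((2 * (q - x) - 1 : ℕ) : ℝ) = 2 * q - 2 * x - 1 := by
      push_cast [Nat.cast_sub h1, Nat.cast_sub hx1]
      ring
    rw [hcast]
    have key : (2 * (v : ℝ) + 1) * π * (2 * ↑q - 2 * ↑x - 1 + 1 / 2) / ↑q
        = -((2 * (v : ℝ) + 1) * π * (2 * ↑x + 1 / 2) / ↑q) + ((2 * v + 1 : ℤ) : ℝ) * (2 * π) := by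
      push_cast
      field_simp
      ring
    rw [key, Real.cos_add_int_mul_two_pi, Real.cos_neg]
end

section
/- Let q be an odd prime, ρ = sqrt(12/((q+1)(q-1))), and p_1(x) = ρ(x - (q-1)/2). Then for every x ∈ {0, 1, ..., q-1}, p_1(W(x)) = -(ρ/(2q)) Σ_{v=0}^{q-1} g(v) cos((2v+1)π(2x+1/2)/q). -/
open Finset Real

/-!
Write `θ_v = π(v + 1/2)/q` and `T(n) = ∑_v cos(2nθ_v) / sin²θ_v`. Since
`2 cos θ cos((4x+1)θ) = cos(4xθ) + cos((4x+2)θ)`, the sum in question is `(T(2x) + T(2x+1))/2`.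
The second difference of `T` at `n` is `-4 ∑_v cos(2(n+1)θ_v)`, and this cosine sum vanishes unless
`q ∣ n + 1` (it is `-q` for `n + 1 = q`), so `T` is piecewise linear on `[0, 2q]` with a single kink
at `q`; the relation `T(q) = -T(0)` fixes the constant, giving `T(n) = 2q|n - q| - q²`. Both branches
of `W` then give the same expression in absolute values.
-/

namespace Williams

lemma two_mul_sin_mul_sum_range_cos_odd_mul (α : ℝ) (n : ℕ) :
    2 * sin α * ∑ v ∈ range n, cos ((2 * v + 1) * α) = sin (2 * n * α) := by
  induction n with
  | zero => simp
  | succ n ih =>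
    rw [sum_range_succ, mul_add, ih, two_mul_sin_mul_cos,
      show α - (2 * n + 1) * α = -(2 * n * α) by ring,
      show α + (2 * n + 1) * α = 2 * (n + 1 : ℕ) * α by push_cast; ring, sin_neg]
    ring

lemma cos_two_mul_succ_sub_cos_two_mul (θ : ℝ) (n : ℕ) :
    cos (2 * (n + 1) * θ) - cos (2 * n * θ) =
      -2 * sin θ ^ 2 * (1 + 2 * ∑ k ∈ range n, cos (2 * (k + 1) * θ)) := by
  induction n with
  | zero =>
    rw [Nat.cast_zero, zero_add, mul_one, mul_zero, zero_mul, cos_zero, cos_two_mul, cos_sq',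
      sum_range_zero]
    ring
  | succ n ih =>
    rw [sum_range_succ]
    push_cast
    set a := 2 * ((n : ℝ) + 1) * θ
    have hsum : cos (a + 2 * θ) + cos (a - 2 * θ) = 2 * cos a * (1 - 2 * sin θ ^ 2) := by
      rw [cos_add, cos_sub, cos_two_mul, cos_sq']
      ring
    rw [show 2 * ((n : ℝ) + 1 + 1) * θ = a + 2 * θ by ring,
      show 2 * (n : ℝ) * θ = a - 2 * θ by ring] at *
    linear_combination hsum + ih

noncomputable def theta (q v : ℕ) : ℝ := π * ((v : ℝ) + 1 / 2) / q

lemma sin_theta_pos {q v : ℕ} (hv : v < q) : 0 < sin (theta q v) := by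
  have hq : (0 : ℝ) < q := by exact_mod_cast (v.zero_le.trans_lt hv)
  have hv' : (v : ℝ) + 1 / 2 < q := by
    have : (v : ℝ) + 1 ≤ q := by exact_mod_cast hv
    linarith
  apply sin_pos_of_pos_of_lt_pi
  · unfold theta; positivity
  · rw [theta, div_lt_iff₀ hq]
    nlinarith [pi_pos]

noncomputable def cosSum (q m : ℕ) : ℝ := ∑ v ∈ range q, cos (2 * m * theta q v)

lemma cosSum_eq_zero {q m : ℕ} (hm : ¬ q ∣ m) : cosSum q m = 0 := by
  rcases eq_or_ne q 0 with rfl | hq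
  · simp [cosSum]
  have hsin : sin (m * π / q) ≠ 0 := by
    rw [Ne, sin_eq_zero_iff]
    rintro ⟨k, hk⟩
    field_simp at hk
    apply hm
    have : k * q = (m : ℤ) := by exact_mod_cast hk
    exact Int.natCast_dvd_natCast.mp ⟨k, by rw [← this, mul_comm]⟩
  have key := two_mul_sin_mul_sum_range_cos_odd_mul (m * π / q) q
  rw [show 2 * (q : ℝ) * (m * π / q) = (2 * m : ℕ) * π by field_simp; push_cast; ring,
    sin_nat_mul_pi] at key
  have harg : ∀ v : ℕ, 2 * (m : ℝ) * theta q v = (2 * v + 1) * (m * π / q) := by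
    intro v; unfold theta; ring
  simp only [cosSum, harg]
  exact (mul_eq_zero.mp key).resolve_left (mul_ne_zero two_ne_zero hsin)

lemma cos_two_mul_self_mul_theta (q v : ℕ) (hq : q ≠ 0) : cos (2 * q * theta q v) = -1 := by
  rw [theta, show 2 * (q : ℝ) * (π * ((v : ℝ) + 1 / 2) / q) = (2 * v + 1 : ℕ) * π by
    field_simp; push_cast; ring, cos_nat_mul_pi, pow_succ, pow_mul]
  simp

lemma cosSum_self (q : ℕ) : cosSum q q = -q := by
  rcases eq_or_ne q 0 with rfl | hq
  · simp [cosSum]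
  simp [cosSum, cos_two_mul_self_mul_theta q _ hq]

noncomputable def cscSqCosSum (q n : ℕ) : ℝ :=
  ∑ v ∈ range q, cos (2 * n * theta q v) / sin (theta q v) ^ 2

lemma cscSqCosSum_self (q : ℕ) : cscSqCosSum q q = -cscSqCosSum q 0 := by
  rcases eq_or_ne q 0 with rfl | hq
  · simp [cscSqCosSum]
  simp [cscSqCosSum, cos_two_mul_self_mul_theta q _ hq, neg_div]

lemma cscSqCosSum_succ_sub (q n : ℕ) :
    cscSqCosSum q (n + 1) - cscSqCosSum q n = -2 * q - 4 * ∑ k ∈ range n, cosSum q (k + 1) := by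
  have hterm : ∀ v ∈ range q,
      cos (2 * ((n : ℝ) + 1) * theta q v) / sin (theta q v) ^ 2 -
        cos (2 * n * theta q v) / sin (theta q v) ^ 2 =
      -2 - 4 * ∑ k ∈ range n, cos (2 * ((k : ℝ) + 1) * theta q v) := by
    intro v hv
    have hs := (sin_theta_pos (mem_range.mp hv)).ne'
    rw [← sub_div, cos_two_mul_succ_sub_cos_two_mul, mul_comm (-2 : ℝ), mul_assoc,
      mul_div_cancel_left₀ _ (pow_ne_zero 2 hs)]
    ring
  simp only [cscSqCosSum, cosSum, Nat.cast_add, Nat.cast_one, ← sum_sub_distrib]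
  rw [sum_congr rfl hterm, sum_sub_distrib, ← mul_sum, sum_comm]
  simp [mul_comm]

lemma sum_range_cosSum_succ {q n : ℕ} (hn : n < 2 * q) :
    ∑ k ∈ range n, cosSum q (k + 1) = if q ≤ n then -(q : ℝ) else 0 := by
  have hzero : ∀ k ∈ range n, k + 1 ≠ q → cosSum q (k + 1) = 0 := by
    intro k hk hkq
    apply cosSum_eq_zero
    rintro ⟨c, hc⟩
    have hkn := mem_range.mp hk
    rcases c with _ | _ | c <;> [omega; omega; nlinarith]
  split_ifs with hqn
  · rw [sum_eq_single_of_mem (q - 1) (mem_range.mpr (by omega))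
      (fun k hk hne => hzero k hk (by omega)), Nat.sub_add_cancel (by omega), cosSum_self]
  · exact sum_eq_zero fun k hk => hzero k hk (by have := mem_range.mp hk; omega)

lemma cscSqCosSum_succ_sub_eq_abs {q n : ℕ} (hn : n < 2 * q) :
    cscSqCosSum q (n + 1) - cscSqCosSum q n = 2 * q * (|(n + 1 : ℝ) - q| - |(n : ℝ) - q|) := by
  rw [cscSqCosSum_succ_sub, sum_range_cosSum_succ hn]
  split_ifs with hqn
  · have : (q : ℝ) ≤ n := by exact_mod_cast hqn
    rw [abs_of_nonneg (by linarith), abs_of_nonneg (by linarith)]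
    ring
  · have : (n : ℝ) + 1 ≤ q := by exact_mod_cast (not_le.mp hqn)
    rw [abs_of_nonpos (by linarith), abs_of_nonpos (by linarith)]
    ring

lemma cscSqCosSum_eq_zero_add {q n : ℕ} (hn : n ≤ 2 * q) :
    cscSqCosSum q n = cscSqCosSum q 0 + 2 * q * (|(n : ℝ) - q| - q) := by
  have := sum_range_sub (fun k => cscSqCosSum q k - 2 * q * |(k : ℝ) - q|) n
  rw [sum_eq_zero fun k hk => ?_] at this
  · simp only [Nat.cast_zero, zero_sub, abs_neg, Nat.abs_cast] at this
    linarith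
  · rw [sub_sub_sub_comm, cscSqCosSum_succ_sub_eq_abs (by have := mem_range.mp hk; omega)]
    push_cast; ring

lemma cscSqCosSum_zero (q : ℕ) : cscSqCosSum q 0 = q ^ 2 := by
  have := cscSqCosSum_eq_zero_add (q := q) (n := q) (by omega)
  rw [cscSqCosSum_self, sub_self, abs_zero] at this
  linarith

lemma cscSqCosSum_eq {q n : ℕ} (hn : n ≤ 2 * q) :
    cscSqCosSum q n = 2 * q * |(n : ℝ) - q| - q ^ 2 := by
  rw [cscSqCosSum_eq_zero_add hn, cscSqCosSum_zero]
  ring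

lemma sum_gfun_mul_cos_eq (q x : ℕ) :
    ∑ v ∈ range q, gfun q v * cos ((2 * (v : ℝ) + 1) * π * (2 * (x : ℝ) + 1 / 2) / q) =
      (cscSqCosSum q (2 * x) + cscSqCosSum q (2 * x + 1)) / 2 := by
  rw [cscSqCosSum, cscSqCosSum, ← sum_add_distrib, sum_div]
  refine sum_congr rfl fun v _ => ?_
  set θ := theta q v with hθ
  have hg : gfun q v = cos θ / sin θ ^ 2 := by simp [gfun, hθ, theta]
  have harg : (2 * (v : ℝ) + 1) * π * (2 * (x : ℝ) + 1 / 2) / q = (4 * x + 1) * θ := by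
    rw [hθ, theta]; ring
  rw [hg, harg, show 2 * ((2 * x : ℕ) : ℝ) * θ = (4 * x + 1) * θ - θ by push_cast; ring,
    show 2 * ((2 * x + 1 : ℕ) : ℝ) * θ = (4 * x + 1) * θ + θ by push_cast; ring, cos_add, cos_sub]
  ring

lemma Wnat_sub_half {q x : ℕ} (hx : x < q) :
    (Wnat q x : ℝ) - ((q : ℝ) - 1) / 2 = (q - |2 * (x : ℝ) - q| - |2 * (x : ℝ) + 1 - q|) / 2 := by
  unfold Wnat
  split_ifs with h
  · have : 2 * (x : ℝ) + 1 ≤ q := by exact_mod_cast h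
    rw [abs_of_nonpos (by linarith), abs_of_nonpos (by linarith)]
    push_cast
    ring
  · have hW : ((2 * (q - x) - 1 : ℕ) : ℝ) = 2 * q - 2 * x - 1 := by
      rw [Nat.cast_sub (by omega), Nat.cast_mul, Nat.cast_sub hx.le]
      push_cast
      ring
    have : (q : ℝ) ≤ 2 * x := by exact_mod_cast not_lt.mp h
    rw [hW, abs_of_nonneg (by linarith), abs_of_nonneg (by linarith)]
    ring

end Williams

theorem statement13_general (q : ℕ) (x : ℕ) (hx : x < q) :
    Real.sqrt (12 / (((q : ℝ) + 1) * ((q : ℝ) - 1))) *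
        ((Wnat q x : ℝ) - ((q : ℝ) - 1) / 2) =
      -(Real.sqrt (12 / (((q : ℝ) + 1) * ((q : ℝ) - 1))) / (2 * q)) *
        ∑ v ∈ Finset.range q,
          gfun q v * Real.cos ((2 * (v : ℝ) + 1) * π * (2 * (x : ℝ) + 1 / 2) / q) := by
  have hq : (q : ℝ) ≠ 0 := by exact_mod_cast (x.zero_le.trans_lt hx).ne'
  rw [Williams.Wnat_sub_half hx, Williams.sum_gfun_mul_cos_eq, Williams.cscSqCosSum_eq (by omega),
    Williams.cscSqCosSum_eq (by omega)]
  push_cast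
  field_simp
  ring

/-- For an odd prime `q`, with `ρ = √(12/((q+1)(q-1)))` and
`p₁(x) = ρ(x - (q-1)/2)`, for every `x ∈ {0, ..., q-1}`,
`p₁(W(x)) = -(ρ/(2q)) ∑_{v=0}^{q-1} g(v) cos((2v+1)π(2x+1/2)/q)`. -/
theorem statement13 (q : ℕ) (hq : q.Prime) (hodd : Odd q) (x : ℕ) (hx : x < q) :
    Real.sqrt (12 / (((q : ℝ) + 1) * ((q : ℝ) - 1))) *
        ((Wnat q x : ℝ) - ((q : ℝ) - 1) / 2) =
      -(Real.sqrt (12 / (((q : ℝ) + 1) * ((q : ℝ) - 1))) / (2 * q)) *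
        ∑ v ∈ Finset.range q,
          gfun q v * Real.cos ((2 * (v : ℝ) + 1) * π * (2 * (x : ℝ) + 1 / 2) / q) :=
  statement13_general q x hx
end

section
/- Let q be an odd prime, let c_2 ∈ {1, ..., q-1}, e_0 ∈ {1, ..., q-1}, and v_1, v_2, v_3 ∈ {0, ..., q-1}. Define S = Σ_{z_1=0}^{q-1} Σ_{z_2=0}^{q-1} sin(2(2v_1+1)π z_1/q) · sin(2(2v_2+1)π z_2/q) · sin(2(2v_3+1)π (z_1 + c_2 z_2 + e_0)/q), and set v_{10} = q - 1 - v_3 and v_{20} = v_3 c_2 + (c_2 - 1)(q+1)/2 (mod q), with v_{20} taken in {0,...,q-1}. Then: S = (q²/4) sin(2π(2v_3+1)e_0/q) if (v_1, v_2) equals (v_{10}, v_{20}) or (q-1-v_{10}, q-1-v_{20}); S = -(q²/4) sin(2π(2v_3+1)e_0/q) if (v_1, v_2) equals (v_{10}, q-1-v_{20}) or (q-1-v_{10}, v_{20}); and S = 0 otherwise. (When v_3 = (q-1)/2 the listed cases may overlap, but then sin(2π(2v_3+1)e_0/q) = 0, so all prescribed values agree.) -/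
/-!
Writing `sin (a z₁ + b z₂ + θ)` as the imaginary part of `e^{iθ} e^{i a z₁} e^{i b z₂}`, the
double sum factors into `Im (e^{iθ} F₁ F₂)`, where each `Fⱼ = ∑_z sin(2πkz/q) e^{2πimz/q}` is a
difference of two geometric sums of `q`-th roots of unity. By orthogonality
`Fⱼ = (iq/2) εⱼ` with `εⱼ = [m ≡ k] - [m ≡ -k] (mod q)`, so `S = -(q²/4) ε₁ ε₂ sin θ`. For odd
`q` and odd residues `2v+1` the signs `εⱼ` are read off from `v` directly, and
`2 v₂₀ + 1 ≡ c₂ (2 v₃ + 1) (mod q)` is what singles out `v₂₀`.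
-/

open Finset Real

section Orthogonality

open Complex

theorem geom_sum_eq_ite_of_pow_eq_one {K : Type*} [Field K] [DecidableEq K] {x : K} {n : ℕ}
    (hx : x ^ n = 1) : ∑ i ∈ range n, x ^ i = if x = 1 then (n : K) else 0 := by
  split_ifs with h1
  · simp [h1]
  · rw [geom_sum_eq h1, hx, sub_self, zero_div]

theorem sum_range_exp_eq_ite (q : ℕ) (hq : q ≠ 0) (m : ℤ) :
    ∑ z ∈ range q, exp (↑(2 * π * m * z / q) * I) = if (m : ZMod q) = 0 then (q : ℂ) else 0 := by
  have hω := isPrimitiveRoot_exp q hq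
  have hpow : ∀ z : ℕ, exp (↑(2 * π * m * z / q) * I) = (exp (2 * π * I / q) ^ m) ^ z := by
    intro z
    rw [← zpow_natCast, ← zpow_mul, ← exp_int_mul]
    congr 1
    push_cast
    ring
  have hq1 : (exp (2 * π * I / q) ^ m) ^ q = 1 := by
    rw [← zpow_natCast, ← zpow_mul, mul_comm m, zpow_mul, zpow_natCast, hω.pow_eq_one, one_zpow]
  simp_rw [hpow, geom_sum_eq_ite_of_pow_eq_one hq1, hω.zpow_eq_one_iff_dvd,
    ZMod.intCast_zmod_eq_zero_iff_dvd]

def sineSign {q : ℕ} (k m : ZMod q) : ℝ :=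
  (if m = k then 1 else 0) - if m = -k then 1 else 0

theorem sum_range_sin_mul_exp (q : ℕ) (hq : q ≠ 0) (k m : ℤ) :
    ∑ z ∈ range q, (Real.sin (2 * k * π * z / q) : ℂ) * exp (↑(2 * π * m * z / q) * I) =
      q * I / 2 * sineSign (k : ZMod q) m := by
  have hterm : ∀ z : ℕ, (Real.sin (2 * k * π * z / q) : ℂ) * exp (↑(2 * π * m * z / q) * I) =
      I / 2 * (exp (↑(2 * π * ↑(m - k) * z / q) * I) - exp (↑(2 * π * ↑(m + k) * z / q) * I)) := by
    intro z
    set a : ℝ := 2 * k * π * z / q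
    set b : ℝ := 2 * π * m * z / q
    rw [ofReal_sin, Complex.sin,
      show (↑(2 * π * ↑(m - k) * z / q) : ℂ) * I = -↑a * I + ↑b * I by push_cast [a, b]; ring,
      show (↑(2 * π * ↑(m + k) * z / q) : ℂ) * I = ↑a * I + ↑b * I by push_cast [a, b]; ring,
      Complex.exp_add, Complex.exp_add]
    ring
  simp_rw [hterm, ← mul_sum, sum_sub_distrib, sum_range_exp_eq_ite q hq, sineSign]
  push_cast
  simp only [sub_eq_zero, ← eq_neg_iff_add_eq_zero]
  split_ifs <;> push_cast <;> ring

theorem sum_sum_mul_mul_sin_add {ι κ : Type*} (s : Finset ι) (t : Finset κ) (f a : ι → ℝ)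
    (g b : κ → ℝ) (c : ℝ) :
    ∑ x ∈ s, ∑ y ∈ t, f x * g y * Real.sin (a x + b y + c) =
      (exp (↑c * I) * ((∑ x ∈ s, (f x : ℂ) * exp (↑(a x) * I)) *
        ∑ y ∈ t, (g y : ℂ) * exp (↑(b y) * I))).im := by
  rw [sum_mul_sum, mul_sum, im_sum]
  refine sum_congr rfl fun x _ => ?_
  rw [mul_sum, im_sum]
  refine sum_congr rfl fun y _ => ?_
  rw [← exp_ofReal_mul_I_im,
    show (f x : ℂ) * exp (↑(a x) * I) * (g y * exp (↑(b y) * I)) =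
      ((f x * g y : ℝ) : ℂ) * (exp (↑(a x) * I) * exp (↑(b y) * I)) by push_cast; ring,
    mul_left_comm, im_ofReal_mul, ← Complex.exp_add, ← Complex.exp_add]
  congr 3
  push_cast
  ring

theorem sum_sin_mul_sin_mul_sin (q : ℕ) (hq : q ≠ 0) (k₁ k₂ k₃ c : ℤ) (e : ℝ) :
    ∑ z₁ ∈ range q, ∑ z₂ ∈ range q, Real.sin (2 * k₁ * π * z₁ / q) *
      Real.sin (2 * k₂ * π * z₂ / q) * Real.sin (2 * k₃ * π * (z₁ + c * z₂ + e) / q) =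
    -(q ^ 2 / 4) * sineSign (k₁ : ZMod q) k₃ * sineSign (k₂ : ZMod q) (c * k₃) *
      Real.sin (2 * π * k₃ * e / q) := by
  have hphase : ∀ z₁ z₂ : ℕ, 2 * k₃ * π * (z₁ + c * z₂ + e) / q =
      2 * π * k₃ * z₁ / q + 2 * π * ↑(c * k₃) * z₂ / q + 2 * π * k₃ * e / q := by
    intro z₁ z₂
    push_cast
    ring
  simp_rw [hphase]
  rw [sum_sum_mul_mul_sin_add (range q) (range q) (fun z : ℕ => Real.sin (2 * k₁ * π * z / q))
    (fun z : ℕ => 2 * π * k₃ * z / q) (fun z : ℕ => Real.sin (2 * k₂ * π * z / q))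
    (fun z : ℕ => 2 * π * ↑(c * k₃) * z / q), sum_range_sin_mul_exp q hq,
    sum_range_sin_mul_exp q hq]
  set θ : ℝ := 2 * π * k₃ * e / q
  set ε₁ := sineSign (k₁ : ZMod q) k₃
  set ε₂ := sineSign (k₂ : ZMod q) ↑(c * k₃)
  rw [show exp (↑θ * I) * (q * I / 2 * ε₁ * (q * I / 2 * ε₂)) =
      ((-(q ^ 2 / 4) * ε₁ * ε₂ : ℝ) : ℂ) * exp (↑θ * I) by
    push_cast
    linear_combination (q ^ 2 / 4 * (ε₁ * ε₂ : ℂ) * exp (↑θ * I)) * I_sq,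
    im_ofReal_mul, exp_ofReal_mul_I_im, ← Int.cast_mul]

end Orthogonality

namespace ZMod

theorem natCast_eq_zero_iff_eq_of_lt_two_mul {q n : ℕ} (h0 : 0 < n) (h : n < 2 * q) :
    (n : ZMod q) = 0 ↔ n = q := by
  rw [natCast_eq_zero_iff]
  constructor
  · rintro ⟨c, rfl⟩
    rcases c with _ | _ | c
    · omega
    · ring
    · nlinarith
  · rintro rfl
    exact dvd_rfl

theorem isUnit_two_of_odd {q : ℕ} (hq : Odd q) : IsUnit (2 : ZMod q) := by
  exact_mod_cast (isUnit_iff_coprime 2 q).2 (Nat.coprime_two_left.2 hq)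

theorem two_mul_natCast_add_one_inj {q a b : ℕ} (hq : Odd q) (ha : a < q) (hb : b < q) :
    2 * (a : ZMod q) + 1 = 2 * b + 1 ↔ a = b := by
  refine ⟨fun h => ?_, fun h => h ▸ rfl⟩
  have hab : (a : ZMod q) = b := (isUnit_two_of_odd hq).mul_left_cancel (add_right_cancel h)
  rwa [natCast_eq_natCast_iff', Nat.mod_eq_of_lt ha, Nat.mod_eq_of_lt hb] at hab

theorem two_mul_natCast_add_one_eq_neg_iff {q a b : ℕ} (hq : Odd q) (ha : a < q) (hb : b < q) :
    2 * (a : ZMod q) + 1 = -(2 * b + 1) ↔ a + b + 1 = q := by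
  rw [eq_neg_iff_add_eq_zero,
    show 2 * (a : ZMod q) + 1 + (2 * b + 1) = 2 * ((a + b + 1 : ℕ) : ZMod q) by push_cast; ring,
    (isUnit_two_of_odd hq).mul_right_eq_zero,
    natCast_eq_zero_iff_eq_of_lt_two_mul (by omega) (by omega)]

end ZMod

theorem sineSign_two_mul_natCast_add_one {q a b : ℕ} (hq : Odd q) (ha : a < q) (hb : b < q) :
    sineSign (2 * (a : ZMod q) + 1) (2 * (b : ZMod q) + 1) =
      (if b = a then 1 else 0) - if b + a + 1 = q then 1 else 0 := by
  simp only [sineSign, ZMod.two_mul_natCast_add_one_inj hq hb ha,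
    ZMod.two_mul_natCast_add_one_eq_neg_iff hq hb ha]

/-- `(q + 1) / 2` is the inverse of `2` modulo `q`. -/
theorem two_mul_natCast_mod_add_one {q c v : ℕ} (hq : Odd q) (hc : 1 ≤ c) :
    2 * (((v * c + (c - 1) * ((q + 1) / 2)) % q : ℕ) : ZMod q) + 1 = c * (2 * v + 1) := by
  have hhalf : 2 * (((q + 1) / 2 : ℕ) : ZMod q) = 1 := by
    obtain ⟨r, rfl⟩ := hq
    rw [show (2 * r + 1 + 1) / 2 = r + 1 by omega]
    have hself := ZMod.natCast_self (2 * r + 1)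
    push_cast at hself ⊢
    linear_combination hself
  rw [ZMod.natCast_mod]
  push_cast [Nat.cast_sub hc]
  linear_combination ((c : ZMod q) - 1) * hhalf

theorem two_mul_mod_add_one_ne {q c v : ℕ} [Fact q.Prime] (hq : Odd q) (hc : 1 ≤ c) (hcq : c < q)
    (hv : v < q) (hvq : 2 * v + 1 ≠ q) :
    2 * ((v * c + (c - 1) * ((q + 1) / 2)) % q) + 1 ≠ q := by
  intro h
  have hv0 : (2 * (v : ZMod q) + 1) ≠ 0 := by
    exact_mod_cast (ZMod.natCast_eq_zero_iff_eq_of_lt_two_mul (by omega) (by omega)).not.2 hvq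
  have hc0 : (c : ZMod q) ≠ 0 :=
    (ZMod.natCast_eq_zero_iff_eq_of_lt_two_mul (by omega) (by omega)).not.2 (by omega)
  apply mul_ne_zero hc0 hv0
  rw [← two_mul_natCast_mod_add_one hq hc]
  exact_mod_cast (ZMod.natCast_eq_zero_iff_eq_of_lt_two_mul (by omega) (by omega)).2 h

theorem statement18_general (q : ℕ) (hq : q.Prime) (hodd : Odd q)
    (c2 e0 : ℕ) (hc2 : 1 ≤ c2) (hc2' : c2 ≤ q - 1)
    (v1 v2 v3 : ℕ) (hv1 : v1 ≤ q - 1) (hv2 : v2 ≤ q - 1) (hv3 : v3 ≤ q - 1) :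
    let S : ℝ := ∑ z1 ∈ Finset.range q, ∑ z2 ∈ Finset.range q,
      Real.sin (2 * (2 * (v1 : ℝ) + 1) * π * (z1 : ℝ) / q) *
        Real.sin (2 * (2 * (v2 : ℝ) + 1) * π * (z2 : ℝ) / q) *
        Real.sin (2 * (2 * (v3 : ℝ) + 1) * π * ((z1 : ℝ) + (c2 : ℝ) * (z2 : ℝ) + (e0 : ℝ)) / q)
    let v10 : ℕ := q - 1 - v3
    let v20 : ℕ := (v3 * c2 + (c2 - 1) * ((q + 1) / 2)) % q
    (((v1, v2) = (v10, v20) ∨ (v1, v2) = (q - 1 - v10, q - 1 - v20)) →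
        S = (q : ℝ) ^ 2 / 4 * Real.sin (2 * π * (2 * (v3 : ℝ) + 1) * (e0 : ℝ) / q)) ∧
    (((v1, v2) = (v10, q - 1 - v20) ∨ (v1, v2) = (q - 1 - v10, v20)) →
        S = -((q : ℝ) ^ 2 / 4) * Real.sin (2 * π * (2 * (v3 : ℝ) + 1) * (e0 : ℝ) / q)) ∧
    (¬((v1, v2) = (v10, v20) ∨ (v1, v2) = (q - 1 - v10, q - 1 - v20) ∨
        (v1, v2) = (v10, q - 1 - v20) ∨ (v1, v2) = (q - 1 - v10, v20)) →
        S = 0) := by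
  intro S v10 v20
  have : Fact q.Prime := ⟨hq⟩
  have hv20 : v20 < q := Nat.mod_lt _ hq.pos
  have hS : S = -(q ^ 2 / 4) * ((if v3 = v1 then 1 else 0) - if v3 + v1 + 1 = q then 1 else 0) *
      ((if v20 = v2 then 1 else 0) - if v20 + v2 + 1 = q then 1 else 0) *
      Real.sin (2 * π * (2 * (v3 : ℝ) + 1) * (e0 : ℝ) / q) := by
    have h := sum_sin_mul_sin_mul_sin q hq.ne_zero (2 * v1 + 1) (2 * v2 + 1) (2 * v3 + 1) c2 e0
    push_cast at h
    rw [← two_mul_natCast_mod_add_one hodd hc2,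
      sineSign_two_mul_natCast_add_one hodd (by omega) (by omega),
      sineSign_two_mul_natCast_add_one hodd (by omega) hv20] at h
    exact h
  by_cases hdeg : 2 * v3 + 1 = q
  · have hθ : Real.sin (2 * π * (2 * (v3 : ℝ) + 1) * (e0 : ℝ) / q) = 0 := by
      rw [← Real.sin_nat_mul_pi (2 * e0)]
      congr 1
      have hq0 : (q : ℝ) ≠ 0 := by exact_mod_cast hq.ne_zero
      rw [show 2 * (v3 : ℝ) + 1 = q by exact_mod_cast hdeg]
      field_simp
      push_cast
      ring
    simp [hS, hθ]
  · have h20 : 2 * v20 + 1 ≠ q := two_mul_mod_add_one_ne hodd hc2 (by omega) (by omega) hdeg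
    refine ⟨fun h => ?_, fun h => ?_, fun h => ?_⟩ <;> simp only [Prod.mk.injEq] at h <;>
      rw [hS] <;> split_ifs <;> first | omega | ring

/-- the exact evaluation of
`S = ∑_{z₁,z₂=0}^{q-1} sin(2(2v₁+1)πz₁/q) sin(2(2v₂+1)πz₂/q) sin(2(2v₃+1)π(z₁+c₂z₂+e₀)/q)`
for an odd prime `q`: with `v₁₀ = q-1-v₃` and `v₂₀ = v₃c₂ + (c₂-1)(q+1)/2 (mod q)`,
`S = (q²/4)sin(2π(2v₃+1)e₀/q)` if `(v₁,v₂) ∈ {(v₁₀,v₂₀), (q-1-v₁₀, q-1-v₂₀)}`,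
`S = -(q²/4)sin(2π(2v₃+1)e₀/q)` if `(v₁,v₂) ∈ {(v₁₀, q-1-v₂₀), (q-1-v₁₀, v₂₀)}`,
and `S = 0` otherwise. -/
theorem statement18 (q : ℕ) (hq : q.Prime) (hodd : Odd q)
    (c2 e0 : ℕ) (hc2 : 1 ≤ c2) (hc2' : c2 ≤ q - 1) (he0 : 1 ≤ e0) (he0' : e0 ≤ q - 1)
    (v1 v2 v3 : ℕ) (hv1 : v1 ≤ q - 1) (hv2 : v2 ≤ q - 1) (hv3 : v3 ≤ q - 1) :
    let S : ℝ := ∑ z1 ∈ Finset.range q, ∑ z2 ∈ Finset.range q,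
      Real.sin (2 * (2 * (v1 : ℝ) + 1) * π * (z1 : ℝ) / q) *
        Real.sin (2 * (2 * (v2 : ℝ) + 1) * π * (z2 : ℝ) / q) *
        Real.sin (2 * (2 * (v3 : ℝ) + 1) * π * ((z1 : ℝ) + (c2 : ℝ) * (z2 : ℝ) + (e0 : ℝ)) / q)
    let v10 : ℕ := q - 1 - v3
    let v20 : ℕ := (v3 * c2 + (c2 - 1) * ((q + 1) / 2)) % q
    (((v1, v2) = (v10, v20) ∨ (v1, v2) = (q - 1 - v10, q - 1 - v20)) →
        S = (q : ℝ) ^ 2 / 4 * Real.sin (2 * π * (2 * (v3 : ℝ) + 1) * (e0 : ℝ) / q)) ∧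
    (((v1, v2) = (v10, q - 1 - v20) ∨ (v1, v2) = (q - 1 - v10, v20)) →
        S = -((q : ℝ) ^ 2 / 4) * Real.sin (2 * π * (2 * (v3 : ℝ) + 1) * (e0 : ℝ) / q)) ∧
    (¬((v1, v2) = (v10, v20) ∨ (v1, v2) = (q - 1 - v10, q - 1 - v20) ∨
        (v1, v2) = (v10, q - 1 - v20) ∨ (v1, v2) = (q - 1 - v10, v20)) →
        S = 0) :=
  statement18_general q hq hodd c2 e0 hc2 hc2' v1 v2 v3 hv1 hv2 hv3
end

section
/- Let q ≥ 3 be an odd integer, let W^{-1} denote the inverse of the Williams transformation on Z_q, given explicitly by W^{-1}(x) = x/2 for even x ∈ {0,...,q-1} and W^{-1}(x) = q - (x+1)/2 for odd x ∈ {0,...,q-1}, and let γ = (q-1)/4 if q ≡ 1 (mod 4) and γ = (3q-1)/4 if q ≡ 3 (mod 4). Then for every x ∈ {0, 1, ..., q-1}, W^{-1}(q-1-x) ≡ 2γ - W^{-1}(x) (mod q). -/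
/-- The inverse of the Williams transformation on `{0, ..., q-1}`:
`W⁻¹(x) = x/2` for even `x` and `W⁻¹(x) = q - (x+1)/2` for odd `x`. -/
def Winv (q x : ℕ) : ℕ := if x % 2 = 0 then x / 2 else q - (x + 1) / 2

/-- For an odd integer `q ≥ 3` and every `x ∈ {0, ..., q-1}`,
`W⁻¹(q-1-x) ≡ 2γ - W⁻¹(x) (mod q)`. -/
theorem statement19 (q : ℕ) (hq : 3 ≤ q) (hodd : Odd q) (x : ℕ) (hx : x < q) :
    (Winv q (q - 1 - x) : ℤ) ≡ 2 * (gammaNat q : ℤ) - (Winv q x : ℤ) [ZMOD (q : ℤ)] := by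
  obtain ⟨k, hk⟩ := hodd
  have hpar : (q - 1 - x) % 2 = x % 2 := by omega
  have h2 : x % 2 = 0 ∨ x % 2 = 1 := by omega
  have h4 : q % 4 = 1 ∨ q % 4 = 3 := by omega
  unfold Winv gammaNat
  rw [Int.modEq_iff_dvd]
  rcases h2 with h2 | h2 <;> rcases h4 with h4 | h4 <;>
    simp only [hpar, h2, h4] <;> norm_num
  · exact ⟨0, by omega⟩
  · exact ⟨1, by omega⟩
  · exact ⟨-1, by omega⟩
  · exact ⟨0, by omega⟩
end
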